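/- Let the coupling J_A take the two values +J and −J each with probability 1/2 (all other couplings arbitrary but fixed). Then the average deviation satisfies E[Δ(β,J_A)] = ½(Δ(β,J) + Δ(β,−J)) ≥ 0 for every β > 0, where Δ(β,J_A) = e_A(β,J_A) + J_A tanh(βJ_A). -/

import Mathlib

open Finset Real

/-- Spin value of a Boolean spin variable: `true ↦ 1`, `false ↦ -1`. -/
def spin (b : Bool) : ℝ := if b then 1 else -1

/-- Energy of a finite Ising system: `H(S) = -∑_{A ⊆ V} J_A ∏_{i ∈ A} S_i`. -/
noncomputable def energy {V : Type*} [Fintype V] [DecidableEq V]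
    (J : Finset V → ℝ) (S : V → Bool) : ℝ :=
  -∑ A : Finset V, J A * ∏ i ∈ A, spin (S i)

/-- Partition function `Z(β, J) = ∑_S exp (-β H(S))`. -/
noncomputable def Z {V : Type*} [Fintype V] [DecidableEq V]
    (β : ℝ) (J : Finset V → ℝ) : ℝ :=
  ∑ S : V → Bool, Real.exp (-β * energy J S)

/-- Thermal average `⟨f⟩_β = Z⁻¹ ∑_S f(S) exp (-β H(S))`. -/
noncomputable def texp {V : Type*} [Fintype V] [DecidableEq V]
    (β : ℝ) (J : Finset V → ℝ) (f : (V → Bool) → ℝ) : ℝ :=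
  (∑ S : V → Bool, f S * Real.exp (-β * energy J S)) / Z β J

/-- Thermal average of the local energy of subset `A`:
`e_A(β, J_A) = -⟨J_A ∏_{i ∈ A} S_i⟩_β`. -/
noncomputable def eA {V : Type*} [Fintype V] [DecidableEq V]
    (β : ℝ) (J : Finset V → ℝ) (A : Finset V) : ℝ :=
  texp β J (fun S => -(J A * ∏ i ∈ A, spin (S i)))

/-- Deviation of the local energy from its isolated value:
`Δ(β, J_A) = e_A(β, J_A) + J_A tanh (β J_A)`. -/
noncomputable def Δ {V : Type*} [Fintype V] [DecidableEq V]
    (β : ℝ) (J : Finset V → ℝ) (A : Finset V) : ℝ :=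
  eA β J A + J A * Real.tanh (β * J A)

/-- Couplings with the single coupling `J_A` negated. -/
noncomputable def flipJ {V : Type*} [DecidableEq V]
    (J : Finset V → ℝ) (A : Finset V) : Finset V → ℝ :=
  Function.update J A (-(J A))

/-!
Write `σ_A = ∏_{i ∈ A} S_i`. Since `σ_A² = 1`, `exp (β c σ_A) = cosh (β c) + σ_A sinh (β c)`, so
switching on the coupling `J_A = c` merely reweights the system in which `J_A = 0`. If `m` is the
correlation `⟨σ_A⟩` of that decoupled system and `t = tanh (β c)`, this gives the addition formula
`⟨σ_A⟩_c = (m + t) / (1 + m t)`, hence `Δ(β, c) = -c m (1 - t²) / (1 + m t)` and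
`Δ(β, J) + Δ(β, -J) = 2 J t m² (1 - t²) / (1 - m² t²)`, which is nonnegative because `J t ≥ 0`,
`|m| ≤ 1` and `|t| < 1`.
-/

theorem Real.exp_mul_eq_cosh_add_mul_sinh {ε : ℝ} (hε : ε * ε = 1) (x : ℝ) :
    exp (x * ε) = cosh x + ε * sinh x := by
  rcases mul_self_eq_one_iff.mp hε with rfl | rfl
  · simp [cosh_add_sinh]
  · simp [← sub_eq_add_neg, cosh_sub_sinh]

theorem Real.mul_tanh_mul_nonneg {β : ℝ} (hβ : 0 ≤ β) (x : ℝ) : 0 ≤ x * tanh (β * x) := by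
  rw [tanh_eq_sinh_div_cosh, ← mul_div_assoc]
  refine div_nonneg ?_ (cosh_pos _).le
  rcases le_total 0 x with hx | hx
  · exact mul_nonneg hx (sinh_nonneg_iff.mpr (mul_nonneg hβ hx))
  · exact mul_nonneg_of_nonpos_of_nonpos hx
      (sinh_nonpos_iff.mpr (mul_nonpos_of_nonneg_of_nonpos hβ hx))

theorem spin_mul_self (b : Bool) : spin b * spin b = 1 := by
  cases b <;> norm_num [spin]

theorem abs_spin (b : Bool) : |spin b| = 1 := by
  cases b <;> norm_num [spin]

theorem prod_spin_mul_self {ι : Type*} (s : Finset ι) (S : ι → Bool) :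
    (∏ i ∈ s, spin (S i)) * ∏ i ∈ s, spin (S i) = 1 := by
  rw [← prod_mul_distrib]
  exact prod_eq_one fun i _ => spin_mul_self (S i)

theorem abs_prod_spin {ι : Type*} (s : Finset ι) (S : ι → Bool) : |∏ i ∈ s, spin (S i)| = 1 := by
  rw [abs_prod]
  exact prod_eq_one fun i _ => abs_spin (S i)

section Ising

variable {V : Type*} [Fintype V] [DecidableEq V] (β : ℝ) (J : Finset V → ℝ) (A : Finset V)

theorem Z_pos : 0 < Z β J :=
  sum_pos (fun _ _ => exp_pos _) univ_nonempty

theorem texp_neg_mul (c : ℝ) (f : (V → Bool) → ℝ) :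
    texp β J (fun S => -(c * f S)) = -(c * texp β J f) := by
  simp only [texp, neg_mul, mul_assoc, sum_neg_distrib, ← mul_sum, neg_div, mul_div_assoc]

theorem texp_mul_self_eq_one {f : (V → Bool) → ℝ} (hf : ∀ S, f S * f S = 1) :
    texp β J (fun S => f S * f S) = 1 := by
  simp only [texp, hf, one_mul]
  exact div_self (Z_pos β J).ne'

theorem abs_texp_le_one {f : (V → Bool) → ℝ} (hf : ∀ S, |f S| ≤ 1) :
    |texp β J f| ≤ 1 := by
  rw [texp, abs_div, abs_of_pos (Z_pos β J), div_le_one (Z_pos β J)]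
  calc |∑ S, f S * exp (-β * energy J S)|
      ≤ ∑ S, |f S * exp (-β * energy J S)| := abs_sum_le_sum_abs _ _
    _ ≤ ∑ S, exp (-β * energy J S) := by
      gcongr with S
      rw [abs_mul, abs_of_pos (exp_pos _)]
      exact mul_le_of_le_one_left (exp_pos _).le (hf S)

theorem energy_update (c : ℝ) (S : V → Bool) :
    energy (Function.update J A c) S
      = energy (Function.update J A 0) S - c * ∏ i ∈ A, spin (S i) := by
  have hsplit (c' : ℝ) : ∑ B, Function.update J A c' B * ∏ i ∈ B, spin (S i)
      = c' * ∏ i ∈ A, spin (S i) + ∑ B ∈ univ.erase A, J B * ∏ i ∈ B, spin (S i) := by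
    rw [← add_sum_erase _ _ (mem_univ A), Function.update_self]
    congr 1
    exact sum_congr rfl fun B hB => by rw [Function.update_of_ne (ne_of_mem_erase hB)]
  simp only [energy, hsplit]
  ring

theorem sum_mul_exp_energy_update (c : ℝ) (f : (V → Bool) → ℝ) :
    ∑ S, f S * exp (-β * energy (Function.update J A c) S)
      = cosh (β * c) * ∑ S, f S * exp (-β * energy (Function.update J A 0) S)
        + sinh (β * c) * ∑ S, (f S * ∏ i ∈ A, spin (S i))
            * exp (-β * energy (Function.update J A 0) S) := by
  simp only [mul_sum, ← sum_add_distrib]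
  refine sum_congr rfl fun S _ => ?_
  rw [energy_update, show -β * (energy (Function.update J A 0) S - c * ∏ i ∈ A, spin (S i))
      = -β * energy (Function.update J A 0) S + β * c * ∏ i ∈ A, spin (S i) by ring,
    exp_add, exp_mul_eq_cosh_add_mul_sinh (prod_spin_mul_self A S)]
  ring

theorem texp_update (c : ℝ) (f : (V → Bool) → ℝ) :
    texp β (Function.update J A c) f
      = (cosh (β * c) * texp β (Function.update J A 0) f
          + sinh (β * c) * texp β (Function.update J A 0) (fun S => f S * ∏ i ∈ A, spin (S i)))
        / (cosh (β * c)
          + sinh (β * c) * texp β (Function.update J A 0) (fun S => ∏ i ∈ A, spin (S i))) := by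
  have hZ : Z β (Function.update J A c) = cosh (β * c) * Z β (Function.update J A 0)
      + sinh (β * c)
        * ∑ S, (∏ i ∈ A, spin (S i)) * exp (-β * energy (Function.update J A 0) S) := by
    simpa only [Z, one_mul] using sum_mul_exp_energy_update β J A c (fun _ => 1)
  have hZ0 := (Z_pos β (Function.update J A 0)).ne'
  rw [texp, sum_mul_exp_energy_update, hZ]
  simp only [texp]
  field_simp

noncomputable def decoupledCorr : ℝ :=
  texp β (Function.update J A 0) (fun S => ∏ i ∈ A, spin (S i))

theorem abs_decoupledCorr_le_one : |decoupledCorr β J A| ≤ 1 :=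
  abs_texp_le_one β _ fun S => (abs_prod_spin A S).le

theorem texp_prod_spin_update (c : ℝ) :
    texp β (Function.update J A c) (fun S => ∏ i ∈ A, spin (S i))
      = (decoupledCorr β J A + tanh (β * c)) / (1 + decoupledCorr β J A * tanh (β * c)) := by
  have hcosh := (cosh_pos (β * c)).ne'
  rw [texp_update, texp_mul_self_eq_one β _ (prod_spin_mul_self A), ← decoupledCorr,
    tanh_eq_sinh_div_cosh]
  field_simp

theorem abs_decoupledCorr_mul_tanh_lt_one (x : ℝ) :
    |decoupledCorr β J A * tanh x| < 1 := by
  rw [abs_mul]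
  exact mul_lt_one_of_nonneg_of_lt_one_right (abs_decoupledCorr_le_one β J A)
    (abs_nonneg _) (abs_tanh_lt_one x)

theorem Delta_update (c : ℝ) :
    Δ β (Function.update J A c) A
      = -c * decoupledCorr β J A * (1 - tanh (β * c) ^ 2)
          / (1 + decoupledCorr β J A * tanh (β * c)) := by
  have hbound := abs_lt.mp (abs_decoupledCorr_mul_tanh_lt_one β J A (β * c))
  rw [Δ, eA, Function.update_self, texp_neg_mul, texp_prod_spin_update]
  generalize decoupledCorr β J A = m at *
  generalize tanh (β * c) = t at *
  have hplus : 1 + m * t ≠ 0 := by linarith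
  field_simp
  ring

theorem Delta_update_add_Delta_update_neg (c : ℝ) :
    Δ β (Function.update J A c) A + Δ β (Function.update J A (-c)) A
      = 2 * (c * tanh (β * c)) * decoupledCorr β J A ^ 2 * (1 - tanh (β * c) ^ 2)
          / (1 - (decoupledCorr β J A * tanh (β * c)) ^ 2) := by
  have hbound := abs_lt.mp (abs_decoupledCorr_mul_tanh_lt_one β J A (β * c))
  rw [Delta_update, Delta_update, mul_neg, tanh_neg]
  generalize decoupledCorr β J A = m at *
  generalize tanh (β * c) = t at *
  have hplus : 1 + m * t ≠ 0 := by linarith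
  have hminus : 1 + m * -t ≠ 0 := by linarith
  have hprod : 1 - (m * t) ^ 2 ≠ 0 := by nlinarith
  rw [div_add_div _ _ hplus hminus, div_eq_div_iff (mul_ne_zero hplus hminus) hprod]
  ring

end Ising

theorem average_Delta_nonneg_general {V : Type*} [Fintype V] [DecidableEq V]
    (β J0 : ℝ) (hβ : 0 < β) (J : Finset V → ℝ) (A : Finset V) :
    (Δ β (Function.update J A J0) A + Δ β (Function.update J A (-J0)) A) / 2
      ≥ 0 := by
  rw [Delta_update_add_Delta_update_neg]
  have hnum : 0 ≤ 2 * (J0 * tanh (β * J0)) * decoupledCorr β J A ^ 2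
      * (1 - tanh (β * J0) ^ 2) := by
    have hJt := mul_tanh_mul_nonneg hβ.le J0
    have ht := tanh_sq_lt_one (β * J0)
    positivity
  have hden : 0 < 1 - (decoupledCorr β J A * tanh (β * J0)) ^ 2 := by
    rw [sub_pos, sq_lt_one_iff_abs_lt_one]
    exact abs_decoupledCorr_mul_tanh_lt_one β J A (β * J0)
  exact div_nonneg (div_nonneg hnum hden.le) zero_le_two

/-- for a symmetric `±J` coupling on `A`, the average deviation
`E[Δ(β,J_A)] = (Δ(β,J) + Δ(β,-J))/2` is nonnegative. -/
theorem average_Delta_nonneg {V : Type*} [Fintype V] [DecidableEq V]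
    (β J0 : ℝ) (hβ : 0 < β) (hJ : 0 < J0) (J : Finset V → ℝ) (A : Finset V) :
    (Δ β (Function.update J A J0) A + Δ β (Function.update J A (-J0)) A) / 2
      ≥ 0 :=
  average_Delta_nonneg_general β J0 hβ J A
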